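/- arXiv:1411.1536 — 2 statements merged into one kernel-verified Lean document; each statement's English description precedes it below -/
import Mathlib

section
/- Let C and D be two simple closed curves in the plane ℝ² that do not cross each other (i.e. C ∩ D is finite, and the curves never transversally intersect — formally, D does not meet both the bounded and unbounded complementary components of C). If D meets the bounded complementary component of C, then D is entirely contained in the closure of the bounded complementary component of C, and in particular the bounded complementary component of D is contained in the bounded complementary component of C. -/
def SimpleClosedCurve (C : Set (ℝ × ℝ)) : Prop :=
  ∃ γ : AddCircle (1 : ℝ) → ℝ × ℝ, Continuous γ ∧ Function.Injective γ ∧ Set.range γ = C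

/-!
Everything rests on one fact about a simple closed curve `C`: every point `x ∈ C` lies in the
closure of each complementary component. All of `C` except a short sub-arc around `x` is an arc
`β`, and an arc does not separate the plane, so a path in `βᶜ` from one component to the other
must cross `C` inside that short sub-arc, close to `x`.

That an arc `β` does not separate the plane is seen with complex logarithms: for `a ∉ β` the
map `z ↦ z - a` has a continuous logarithm on `β`. If the component of `a` in `βᶜ` were bounded,
gluing `exp` of (an extension of) that logarithm inside the component with `z ↦ z - a` outside
would give a nonvanishing map on the plane agreeing with `z ↦ z - a` on a large circle; it would
then have a logarithm on the whole plane, impossible on that circle.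

For the theorem: `uC` is connected and misses `D`, hence lies in `uD`; a point of `C` in `bD`
would then be a limit of points of `uD`, which is impossible since `bD` is open.
-/

open Set Metric Bornology Function

theorem closure_connectedComponentIn_inter_subset {X : Type*} [TopologicalSpace X] (F : Set X)
    (x : X) : closure (connectedComponentIn F x) ∩ F ⊆ connectedComponentIn F x := by
  rintro y ⟨hy, hyF⟩
  by_cases hx : x ∈ F
  · have hpre : IsPreconnected (insert y (connectedComponentIn F x)) :=
      isPreconnected_connectedComponentIn.subset_closure (subset_insert _ _)
        (insert_subset hy subset_closure)
    exact hpre.subset_connectedComponentIn (mem_insert_of_mem _ (mem_connectedComponentIn hx))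
      (insert_subset hyF (connectedComponentIn_subset _ _)) (mem_insert _ _)
  · simp [connectedComponentIn_eq_empty hx] at hy

theorem exists_mem_connectedComponentIn_norm_eq {E : Type*} [SeminormedAddCommGroup E]
    {K : Set E} {a : E} (ha : a ∉ K) (hunb : ¬ IsBounded (connectedComponentIn Kᶜ a)) {r : ℝ}
    (har : ‖a‖ ≤ r) :
    ∃ z ∈ connectedComponentIn Kᶜ a, ‖z‖ = r := by
  obtain ⟨y, hy, hry⟩ : ∃ y ∈ connectedComponentIn Kᶜ a, r ≤ ‖y‖ := by
    by_contra! h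
    exact hunb ((isBounded_closedBall (x := 0) (r := r)).subset fun y hy ↦ by
      simpa using (h y hy).le)
  exact isPreconnected_connectedComponentIn.intermediate_value
    (mem_connectedComponentIn ha) hy continuous_norm.continuousOn ⟨har, hry⟩

theorem isPreconnected_compl_of_forall_not_isBounded {E : Type*} [NormedAddCommGroup E]
    [NormedSpace ℝ E] (hE : 1 < Module.rank ℝ E) {K : Set E}
    (hK : IsBounded K) (hcomp : ∀ a ∉ K, ¬ IsBounded (connectedComponentIn Kᶜ a)) :
    IsPreconnected Kᶜ := by
  refine isPreconnected_of_forall_pair fun a ha b hb ↦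
    ⟨connectedComponentIn Kᶜ a, connectedComponentIn_subset _ _, mem_connectedComponentIn ha, ?_,
      isPreconnected_connectedComponentIn⟩
  obtain ⟨R, hR⟩ := hK.subset_ball 0
  set r := max R (max ‖a‖ ‖b‖)
  have hsphere : sphere (0 : E) r ⊆ Kᶜ := fun z hz hzK ↦ (mem_ball_zero_iff.mp (hR hzK)).not_ge
    ((le_max_left _ _).trans (mem_sphere_zero_iff_norm.mp hz).ge)
  obtain ⟨za, hza, hzar⟩ := exists_mem_connectedComponentIn_norm_eq ha (hcomp a ha)
    (show ‖a‖ ≤ r by simp [r])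
  obtain ⟨zb, hzb, hzbr⟩ := exists_mem_connectedComponentIn_norm_eq hb (hcomp b hb)
    (show ‖b‖ ≤ r by simp [r])
  -- the sphere of radius `r` is connected and avoids `K`, so it lies in a single component
  have hab := (isPreconnected_sphere hE 0 r).subset_connectedComponentIn
    (mem_sphere_zero_iff_norm.mpr hzar) hsphere (mem_sphere_zero_iff_norm.mpr hzbr)
  rw [← connectedComponentIn_eq hza] at hab
  rw [connectedComponentIn_eq hab, ← connectedComponentIn_eq hzb]
  exact mem_connectedComponentIn hb

namespace Complex

theorem exists_continuous_exp_comp_eq {A : Type*} [TopologicalSpace A] [SimplyConnectedSpace A]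
    [LocallyPathConnectedSpace A] {f : A → ℂ} (hf : Continuous f) (hf0 : ∀ a, f a ≠ 0) :
    ∃ L : A → ℂ, Continuous L ∧ exp ∘ L = f := by
  obtain ⟨a₀⟩ : Nonempty A := inferInstance
  obtain ⟨L, ⟨-, hL⟩, -⟩ := isCoveringMapOn_exp.existsUnique_continuousMap_lifts ⟨f, hf⟩
    (a₀ := a₀) (exp_log (hf0 a₀)) hf0
  exact ⟨L, L.continuous, hL⟩

theorem exists_continuous_exp_comp_eq_of_unitInterval {f : unitInterval → ℂ} (hf : Continuous f)
    (hf0 : ∀ t, f t ≠ 0) : ∃ L : unitInterval → ℂ, Continuous L ∧ exp ∘ L = f := by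
  obtain ⟨L, hL, hLf⟩ := exists_continuous_exp_comp_eq (continuous_IccExtend_iff.mpr hf)
    (fun t ↦ hf0 (projIcc 0 1 zero_le_one t))
  exact ⟨L ∘ Subtype.val, hL.comp continuous_subtype_val, by
    ext t; simpa using congr_fun hLf t⟩

theorem exists_eq_zero_of_eqOn_sphere (a : ℂ) {r : ℝ} (hr : 0 < r) {G : ℂ → ℂ}
    (hG : Continuous G) (hGa : EqOn G (· - a) (sphere a r)) : ∃ z, G z = 0 := by
  by_contra! hG0
  obtain ⟨L, hL, hLG⟩ := exists_continuous_exp_comp_eq hG hG0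
  -- `c` is a continuous logarithm of the constant `r`, hence constant; but it drops by `2πi`
  -- over one turn around the circle
  set c : ℝ → ℂ := fun s ↦ L (a + r * exp (s * I)) - s * I
  have hc : ∀ s, exp (c s) = r := fun s ↦ by
    have hs : a + r * exp (s * I) ∈ sphere a r := by
      simp [norm_exp_ofReal_mul_I, abs_of_pos hr]
    rw [exp_sub, ← Function.comp_apply (f := exp), hLG, hGa hs]
    field_simp [exp_ne_zero]
    ring
  have hconst := isCoveringMap_exp.const_of_comp (g := c) (by fun_prop)
    (fun s s' ↦ Subtype.ext ((hc s).trans (hc s').symm)) 0 (2 * Real.pi)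
  have h2π : exp ((2 * Real.pi : ℝ) * I) = exp ((0 : ℝ) * I) := by
    push_cast; rw [exp_two_pi_mul_I, zero_mul, exp_zero]
  simp only [c, h2π] at hconst
  exact two_pi_I_ne_zero (by push_cast at hconst; linear_combination hconst)

theorem not_isBounded_connectedComponentIn_compl {K : Set ℂ} (hK : IsClosed K) {a : ℂ}
    (ha : a ∉ K) {Λ : ℂ → ℂ} (hΛ : Continuous Λ) (hΛK : EqOn (exp ∘ Λ) (· - a) K) :
    ¬ IsBounded (connectedComponentIn Kᶜ a) := by
  classical
  set V := connectedComponentIn Kᶜ a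
  intro hV
  have haV : a ∈ closure V := subset_closure (mem_connectedComponentIn ha)
  have hfrontier : frontier (closure V) ⊆ K := fun z hz ↦ by
    by_contra hzK
    have hz : z ∈ closure V \ V :=
      hK.isOpen_compl.connectedComponentIn.frontier_eq ▸ frontier_closure_subset hz
    exact hz.2 (closure_connectedComponentIn_inter_subset _ _ ⟨hz.1, hzK⟩)
  obtain ⟨r, hr⟩ := hV.closure.subset_ball a
  have hG : Continuous ((closure V).piecewise (exp ∘ Λ) (· - a)) :=
    continuous_piecewise (fun z hz ↦ hΛK (hfrontier hz)) (by fun_prop) (by fun_prop)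
  obtain ⟨z, hz⟩ := exists_eq_zero_of_eqOn_sphere a (pos_of_mem_ball (hr haV)) hG
    fun z hz ↦ piecewise_eq_of_notMem _ _ _ fun hzV ↦ (hr hzV).ne (mem_sphere.mp hz)
  by_cases hzV : z ∈ closure V
  · simp [piecewise_eq_of_mem _ _ _ hzV, exp_ne_zero] at hz
  · simp only [piecewise_eq_of_notMem _ _ _ hzV, sub_eq_zero] at hz
    exact hzV (hz ▸ haV)

theorem exists_continuous_exp_eqOn_range_sub {f : unitInterval → ℂ} (hf : Continuous f)
    (hinj : Injective f) {a : ℂ} (ha : a ∉ range f) :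
    ∃ Λ : ℂ → ℂ, Continuous Λ ∧ EqOn (exp ∘ Λ) (· - a) (range f) := by
  obtain ⟨L, hL, hLf⟩ := exists_continuous_exp_comp_eq_of_unitInterval (f := (f · - a))
    (by fun_prop) fun t ↦ sub_ne_zero.mpr fun h ↦ ha ⟨t, h⟩
  obtain ⟨Λ, hΛ⟩ := ContinuousMap.exists_extension' (hf.isClosedEmbedding hinj) ⟨L, hL⟩
  refine ⟨Λ, Λ.continuous, ?_⟩
  rintro _ ⟨t, rfl⟩
  show exp (Λ (f t)) = f t - a
  rw [show Λ (f t) = L t from congr_fun hΛ t]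
  exact congr_fun hLf t

theorem isPreconnected_compl_range_of_injective {f : unitInterval → ℂ} (hf : Continuous f)
    (hinj : Injective f) : IsPreconnected (range f)ᶜ := by
  have hK := isCompact_range hf
  refine isPreconnected_compl_of_forall_not_isBounded (by simp [rank_real_complex]) hK.isBounded
    fun a ha ↦ ?_
  obtain ⟨Λ, hΛ, hΛf⟩ := exists_continuous_exp_eqOn_range_sub hf hinj ha
  exact not_isBounded_connectedComponentIn_compl hK.isClosed ha hΛ hΛf

end Complex

theorem isPreconnected_compl_range_of_injective {f : unitInterval → ℝ × ℝ} (hf : Continuous f)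
    (hinj : Injective f) : IsPreconnected (range f)ᶜ := by
  let e : ℂ ≃ₜ ℝ × ℝ := Complex.equivRealProdCLM.toHomeomorph
  have := (Complex.isPreconnected_compl_range_of_injective (f := e.symm ∘ f) (by fun_prop)
    (e.symm.injective.comp hinj)).image e e.continuous.continuousOn
  rwa [e.image_compl, range_comp, e.image_symm, e.image_preimage] at this

theorem SimpleClosedCurve.exists_arc_diff_subset_ball {C : Set (ℝ × ℝ)}
    (hC : SimpleClosedCurve C) {x : ℝ × ℝ} (hx : x ∈ C) {ε : ℝ} (hε : 0 < ε) :
    ∃ f : unitInterval → ℝ × ℝ, Continuous f ∧ Injective f ∧ range f ⊆ C ∧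
      C \ range f ⊆ ball x ε := by
  obtain ⟨γ, hγ, hγinj, rfl⟩ := hC
  obtain ⟨θ, rfl⟩ := hx
  obtain ⟨r₀, rfl⟩ := QuotientAddGroup.mk_surjective θ
  have hg : Continuous fun s : ℝ ↦ γ s := hγ.comp (AddCircle.continuous_mk' 1)
  obtain ⟨δ, hδ, hδg⟩ := Metric.continuous_iff.mp hg r₀ ε hε
  -- the arc is the image of `[r₀ + η, r₀ + 1 - η]`; its complement in `C` is the image of an
  -- interval of radius `η < δ` around `r₀`
  set η := min (δ / 2) (1 / 4)
  have hη : 0 < η := lt_min (half_pos hδ) (by norm_num)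
  have hη' : η ≤ 1 / 4 := min_le_right _ _
  refine ⟨fun t ↦ γ (r₀ + η + t * (1 - 2 * η) : ℝ), by fun_prop, ?_, ?_, ?_⟩
  · intro t t' h
    have hmem : ∀ s : unitInterval, r₀ + η + s * (1 - 2 * η) ∈ Ico (r₀ + η) (r₀ + η + 1) :=
      fun s ↦ ⟨by nlinarith [s.2.1], by nlinarith [s.2.2]⟩
    have := (AddCircle.coe_eq_coe_iff_of_mem_Ico (hmem t) (hmem t')).mp (hγinj h)
    exact Subtype.ext (mul_right_cancel₀ (b := 1 - 2 * η) (by linarith) (by linarith))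
  · rintro _ ⟨t, rfl⟩
    exact mem_range_self _
  · rintro _ ⟨⟨φ, rfl⟩, hφ⟩
    set u : ℝ := (AddCircle.equivIco 1 (r₀ - η) φ : ℝ)
    have hu : u ∈ Ico (r₀ - η) (r₀ - η + 1) := (AddCircle.equivIco 1 (r₀ - η) φ).2
    have huφ : (u : AddCircle (1 : ℝ)) = φ := AddCircle.coe_equivIco
    rw [← huφ]
    by_cases h : r₀ + η ≤ u
    · refine absurd ⟨⟨(u - r₀ - η) / (1 - 2 * η), ?_, ?_⟩, ?_⟩ (huφ ▸ hφ)
      · exact div_nonneg (by linarith) (by linarith)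
      · exact (div_le_one (by linarith)).mpr (by linarith [hu.2])
      · dsimp only
        rw [div_mul_cancel₀ _ (by linarith)]
        ring_nf
    · have hηδ : η ≤ δ / 2 := min_le_left _ _
      exact hδg u (by rw [Real.dist_eq, abs_lt]; constructor <;> linarith [hu.1])

theorem SimpleClosedCurve.subset_closure {C U V : Set (ℝ × ℝ)} (hC : SimpleClosedCurve C)
    (hU : IsOpen U) (hV : IsOpen V) (hUV : Disjoint U V) (hCUV : Cᶜ = U ∪ V)
    (hUne : U.Nonempty) (hVne : V.Nonempty) : C ⊆ closure U := by
  intro x hx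
  refine Metric.mem_closure_iff.mpr fun ε hε ↦ ?_
  by_contra! hfar
  obtain ⟨f, hf, hinj, hfC, hCf⟩ := hC.exists_arc_diff_subset_ball hx hε
  have hoff : ∀ y ∈ U ∪ V, y ∉ range f := fun y hy hyf ↦ (hCUV ▸ hy : y ∈ Cᶜ) (hfC hyf)
  have hcover : (range f)ᶜ ⊆ U ∪ (V ∪ ball x ε) := fun y hyf ↦ by
    by_cases hyC : y ∈ C
    · exact .inr (.inr (hCf ⟨hyC, hyf⟩))
    · rcases (hCUV ▸ hyC : y ∈ U ∪ V) with hyU | hyV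
      exacts [.inl hyU, .inr (.inl hyV)]
  obtain ⟨u, hu⟩ := hUne
  obtain ⟨v, hv⟩ := hVne
  obtain ⟨y, -, hyU, hyV | hyB⟩ := isPreconnected_compl_range_of_injective hf hinj U
    (V ∪ ball x ε) hU (hV.union isOpen_ball) hcover ⟨u, hoff u (.inl hu), hu⟩
    ⟨v, hoff v (.inr hv), .inl hv⟩
  · exact hUV.ne_of_mem hyU hyV rfl
  · exact (hfar y hyU).not_gt (mem_ball'.mp hyB)

theorem noncrossing_curve_nested_general
    (C D bC uC bD uD : Set (ℝ × ℝ))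
    (hC : SimpleClosedCurve C)
    (hCdecomp : Cᶜ = bC ∪ uC) (hCdisj : Disjoint bC uC)
    (hbC : IsOpen bC ∧ IsConnected bC ∧ Bornology.IsBounded bC)
    (huC : IsOpen uC ∧ IsConnected uC ∧ ¬ Bornology.IsBounded uC)
    (hDdecomp : Dᶜ = bD ∪ uD) (hDdisj : Disjoint bD uD)
    (hbD : IsOpen bD ∧ IsConnected bD ∧ Bornology.IsBounded bD)
    (huD : IsOpen uD ∧ IsConnected uD ∧ ¬ Bornology.IsBounded uD)
    (hnocross : ¬ ((D ∩ bC).Nonempty ∧ (D ∩ uC).Nonempty))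
    (hmeets : (D ∩ bC).Nonempty) :
    D ⊆ closure bC ∧ bD ⊆ bC := by
  have hDuC : Disjoint D uC :=
    not_not.mp fun h ↦ hnocross ⟨hmeets, not_disjoint_iff_nonempty_inter.mp h⟩
  have hCbC : C ⊆ closure bC := hC.subset_closure hbC.1 huC.1 hCdisj hCdecomp
    hbC.2.1.nonempty huC.2.1.nonempty
  have hCuC : C ⊆ closure uC := hC.subset_closure huC.1 hbC.1 hCdisj.symm
    (hCdecomp.trans (union_comm _ _)) huC.2.1.nonempty hbC.2.1.nonempty
  have hoffC : ∀ y ∉ C, y ∈ bC ∪ uC := fun y hy ↦ hCdecomp ▸ hy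
  have huCuD : uC ⊆ uD := by
    have hsub : uC ⊆ bD ∪ uD := fun y hy ↦ hDdecomp ▸ hDuC.notMem_of_mem_right hy
    exact (huC.2.1.isPreconnected.subset_or_subset hbD.1 huD.1 hDdisj hsub).resolve_left
      fun h ↦ huC.2.2 (hbD.2.2.subset h)
  refine ⟨fun y hy ↦ ?_, fun y hy ↦ ?_⟩
  · by_cases hyC : y ∈ C
    · exact hCbC hyC
    · exact subset_closure ((hoffC y hyC).resolve_right (hDuC.notMem_of_mem_left hy))
  · have hyuD : y ∉ closure uD := (hDdisj.closure_right hbD.1).notMem_of_mem_left hy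
    by_cases hyC : y ∈ C
    · exact absurd (closure_mono huCuD (hCuC hyC)) hyuD
    · exact (hoffC y hyC).resolve_right fun h ↦ hyuD (subset_closure (huCuD h))

/-- two simple closed curves `C`, `D` in the plane, with Jordan
decompositions `Cᶜ = bC ∪ uC` and `Dᶜ = bD ∪ uD` (`bC`, `bD` the bounded open
connected components, `uC`, `uD` the unbounded ones), such that `C ∩ D` is finite
and `D` does not meet both complementary components of `C` (the curves do not
cross).  If `D` meets `bC`, then `D ⊆ closure bC` and `bD ⊆ bC`. -/
theorem noncrossing_curve_nested
    (C D bC uC bD uD : Set (ℝ × ℝ))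
    (hC : SimpleClosedCurve C) (hD : SimpleClosedCurve D)
    (hCdecomp : Cᶜ = bC ∪ uC) (hCdisj : Disjoint bC uC)
    (hbC : IsOpen bC ∧ IsConnected bC ∧ Bornology.IsBounded bC)
    (huC : IsOpen uC ∧ IsConnected uC ∧ ¬ Bornology.IsBounded uC)
    (hDdecomp : Dᶜ = bD ∪ uD) (hDdisj : Disjoint bD uD)
    (hbD : IsOpen bD ∧ IsConnected bD ∧ Bornology.IsBounded bD)
    (huD : IsOpen uD ∧ IsConnected uD ∧ ¬ Bornology.IsBounded uD)
    (hfin : (C ∩ D).Finite)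
    (hnocross : ¬ ((D ∩ bC).Nonempty ∧ (D ∩ uC).Nonempty))
    (hmeets : (D ∩ bC).Nonempty) :
    D ⊆ closure bC ∧ bD ⊆ bC :=
  noncrossing_curve_nested_general C D bC uC bD uD hC hCdecomp hCdisj hbC huC hDdecomp hDdisj hbD
    huD hnocross hmeets
end

section
/- Let S be a finite family of simple closed curves in the plane that are pairwise non-crossing (for any two distinct curves s, t in S, the curve Im(t) does not meet both the bounded and unbounded complementary components of Im(s)). Define S_II to be the set of s ∈ S such that there exists t ∈ S with the bounded component b_t strictly contained in the bounded component b_s. Then the bounded complementary components {b_s : s ∈ S} are pairwise disjoint if and only if S_II = ∅. -/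
/-!
Two meeting disks `U`, `V` are nested as soon as one of them misses the other's frontier, since a
connected set that meets an open set but not its frontier lies inside it. Otherwise non-crossing
puts each curve in the closure of the other disk, and the frontier of `U ∪ V` lies in
`frontier U ∩ frontier V`: a closed subset of the Jordan curve `frontier U`, and a proper one, as
it misses the points of that curve inside `V`. Such a set `K` cannot enclose a point `x` off the
curve. Indeed `K` is homeomorphic to a compact subset of an interval, so `z - x` has a continuous
logarithm on `K`; extended by Tietze over the enclosed region and glued to `z - x` outside it, this
makes `z - x` the exponential of a continuous function on a large circle around `x`, against its
winding number one.
-/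

open Set Function Metric Bornology Complex

theorem exists_continuous_exp_eq {X : Type*} [TopologicalSpace X] [SimplyConnectedSpace X]
    [LocallyPathConnectedSpace X] {f : X → ℂ} (hf : Continuous f) (hf0 : ∀ x, f x ≠ 0) :
    ∃ L : X → ℂ, Continuous L ∧ ∀ x, exp (L x) = f x := by
  obtain ⟨x₀⟩ := (inferInstance : Nonempty X)
  obtain ⟨L, ⟨-, hL⟩, -⟩ := isCoveringMapOn_exp.existsUnique_continuousMap_lifts ⟨f, hf⟩
    (exp_log (hf0 x₀)) hf0
  exact ⟨L, L.continuous, congrFun hL⟩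

theorem exists_continuous_real_lift_of_ssubset_range {Y : Type*} [TopologicalSpace Y] [T2Space Y]
    {γ : AddCircle (1 : ℝ) → Y} (hγc : Continuous γ) (hγi : Injective γ) {K : Set Y}
    (hKγ : K ⊂ range γ) :
    ∃ σ : K → ℝ, Continuous σ ∧ ∀ z, γ (σ z) = z := by
  obtain ⟨_, ⟨θ₀, rfl⟩, hθ₀K⟩ := exists_of_ssubset hKγ
  obtain ⟨a, rfl⟩ := QuotientAddGroup.mk_surjective θ₀
  let e := (hγc.isClosedEmbedding hγi).toIsEmbedding.toHomeomorph
  let θ : K → AddCircle (1 : ℝ) := fun z ↦ e.symm ⟨z, hKγ.subset z.2⟩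
  have hθ : ∀ z, γ (θ z) = z := fun z ↦ congrArg Subtype.val (e.apply_symm_apply ⟨z, _⟩)
  refine ⟨fun z ↦ AddCircle.equivIco 1 a (θ z), ?_, fun z ↦ ?_⟩
  · refine continuous_iff_continuousAt.2 fun z ↦ continuous_subtype_val.continuousAt.comp <|
      (AddCircle.continuousAt_equivIco 1 a ?_).comp (by fun_prop)
    intro h
    apply hθ₀K
    rw [← h, hθ]
    exact z.2
  · rw [← hθ z]
    congr 1
    exact (AddCircle.equivIco 1 a).symm_apply_apply (θ z)

theorem exists_continuous_exp_eq_sub_on_of_ssubset_range {γ : AddCircle (1 : ℝ) → ℂ}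
    (hγc : Continuous γ) (hγi : Injective γ) {K : Set ℂ} (hK : IsClosed K) (hKγ : K ⊂ range γ)
    {x : ℂ} (hx : x ∉ range γ) :
    ∃ F : ℂ → ℂ, Continuous F ∧ ∀ z ∈ K, exp (F z) = z - x := by
  obtain ⟨σ, hσc, hσ⟩ := exists_continuous_real_lift_of_ssubset_range hγc hγi hKγ
  obtain ⟨L, hLc, hL⟩ := exists_continuous_exp_eq (f := fun t : ℝ ↦ γ t - x) (by fun_prop)
    fun t ↦ sub_ne_zero.2 fun h ↦ hx ⟨t, h⟩
  obtain ⟨F, hF⟩ := ContinuousMap.exists_restrict_eq hK ⟨L ∘ σ, hLc.comp hσc⟩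
  refine ⟨F, F.continuous, fun z hz ↦ ?_⟩
  have hFz : F z = L (σ ⟨z, hz⟩) := congrArg (· ⟨z, hz⟩) hF
  rw [hFz, hL, hσ]

theorem not_exists_continuous_exp_eq_sub_on_sphere (x : ℂ) {R : ℝ} (hR : 0 < R) :
    ¬ ∃ L : ℂ → ℂ, Continuous L ∧ ∀ z ∈ sphere x R, exp (L z) = z - x := by
  rintro ⟨L, hLc, hL⟩
  set g : ℝ → ℂ := fun θ ↦ L (x + R * exp (θ * I)) - θ * I
  have hexp : ∀ θ, exp (g θ) = R := by
    intro θ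
    rw [exp_sub, hL, add_sub_cancel_left, mul_div_assoc, div_self (exp_ne_zero _), mul_one]
    simp [norm_exp_ofReal_mul_I, abs_of_pos hR]
  -- `g` lifts a constant map through `exp`, so it is constant; yet it drops by `2πi` over a period.
  have hconst := isCoveringMap_exp.const_of_comp (by fun_prop : Continuous g)
    (fun θ θ' ↦ Subtype.ext ((hexp θ).trans (hexp θ').symm)) 0 (2 * Real.pi)
  have hperiod : g (2 * Real.pi) = g 0 - 2 * Real.pi * I := by
    simp only [g]
    push_cast
    rw [exp_two_pi_mul_I]
    simp
  rw [hperiod, eq_comm, sub_eq_self] at hconst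
  simp [Real.pi_ne_zero, I_ne_zero] at hconst

theorem not_frontier_subset_of_ssubset_range {γ : AddCircle (1 : ℝ) → ℂ} (hγc : Continuous γ)
    (hγi : Injective γ) {K : Set ℂ} (hK : IsClosed K) (hKγ : K ⊂ range γ) {G : Set ℂ}
    (hG : IsBounded G) {x : ℂ} (hxG : x ∈ G) (hx : x ∉ range γ) : ¬ frontier G ⊆ K := by
  classical
  intro hGK
  obtain ⟨F, hFc, hF⟩ := exists_continuous_exp_eq_sub_on_of_ssubset_range hγc hγi hK hKγ hx
  set H : ℂ → ℂ := (closure G).piecewise (fun z ↦ exp (F z)) (· - x)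
  have hHc : Continuous H := by
    refine continuous_piecewise (fun z hz ↦ ?_) (by fun_prop) (by fun_prop)
    exact hF z (hGK (frontier_closure_subset hz))
  have hH0 : ∀ z, H z ≠ 0 := by
    intro z
    by_cases hz : z ∈ closure G
    · simp [H, hz, exp_ne_zero]
    · simp only [H, piecewise_eq_of_notMem _ _ _ hz, sub_ne_zero]
      rintro rfl
      exact hz (subset_closure hxG)
  obtain ⟨R, hR, hGR⟩ := hG.closure.subset_ball_lt 0 x
  obtain ⟨L, hLc, hL⟩ := exists_continuous_exp_eq hHc hH0
  refine not_exists_continuous_exp_eq_sub_on_sphere x hR ⟨L, hLc, fun z hz ↦ ?_⟩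
  have hz : z ∉ closure G := fun h ↦ (ne_of_lt (hGR h)) (mem_sphere.1 hz)
  rw [hL]
  exact piecewise_eq_of_notMem _ _ _ hz

theorem SimpleClosedCurve.not_frontier_subset {C : Set (ℝ × ℝ)} (hC : SimpleClosedCurve C)
    {K : Set (ℝ × ℝ)} (hK : IsClosed K) (hKC : K ⊂ C) {G : Set (ℝ × ℝ)} (hG : IsBounded G)
    {x : ℝ × ℝ} (hxG : x ∈ G) (hx : x ∉ C) : ¬ frontier G ⊆ K := by
  obtain ⟨γ, hγc, hγi, rfl⟩ := hC
  let e : (ℝ × ℝ) ≃L[ℝ] ℂ := equivRealProdCLM.symm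
  have hrange : range (e ∘ γ) = e '' range γ := range_comp e γ
  refine fun hGK ↦ not_frontier_subset_of_ssubset_range (e.continuous.comp hγc)
    (e.injective.comp hγi) (e.toHomeomorph.isClosed_image.2 hK) (hrange ▸ ?_)
    (e.lipschitz.isBounded_image hG) (mem_image_of_mem e hxG) (hrange ▸ ?_) ?_
  · exact e.injective.image_strictMono hKC
  · exact e.injective.mem_set_image.not.2 hx
  · exact (e.toHomeomorph.image_frontier G).symm.subset.trans (image_mono hGK)

theorem IsPreconnected.subset_of_disjoint_frontier {X : Type*} [TopologicalSpace X] {s u : Set X}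
    (hs : IsPreconnected s) (hu : IsOpen u) (hsu : (s ∩ u).Nonempty)
    (hfr : Disjoint s (frontier u)) : s ⊆ u :=
  hs.subset_of_closure_inter_subset hu hsu fun _ ⟨hzu, hzs⟩ ↦
    ((closure_eq_self_union_frontier u ▸ hzu).resolve_right (hfr.notMem_of_mem_left hzs))

theorem SimpleClosedCurve.disjoint_of_frontier_subset_closure {U V : Set (ℝ × ℝ)}
    (hC : SimpleClosedCurve (frontier U)) (hUo : IsOpen U) (hVo : IsOpen V)
    (hUb : IsBounded U) (hVb : IsBounded V) (hVU : frontier V ⊆ closure U)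
    (hUV : frontier U ⊆ closure V) (hmeet : (frontier U ∩ V).Nonempty) : Disjoint U V := by
  rw [disjoint_iff_inter_eq_empty, ← not_nonempty_iff_eq_empty]
  rintro ⟨x, hxU, hxV⟩
  have hK : frontier U ∩ frontier V ⊂ frontier U := by
    obtain ⟨c, hcU, hcV⟩ := hmeet
    exact ssubset_of_subset_not_subset inter_subset_left
      fun h ↦ (disjoint_frontier_iff_isOpen.2 hVo).notMem_of_mem_right hcV (h hcU).2
  refine hC.not_frontier_subset (isClosed_frontier.inter isClosed_frontier) hK (hUb.union hVb)
    (Or.inl hxU) ((disjoint_frontier_iff_isOpen.2 hUo).notMem_of_mem_right hxU) ?_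
  intro w hw
  have hwUV : w ∉ U ∪ V := (disjoint_frontier_iff_isOpen.2 (hUo.union hVo)).notMem_of_mem_left hw
  rw [mem_union, not_or] at hwUV
  have hwcl : w ∈ closure U ∪ closure V :=
    closure_union (s := U) (t := V) ▸ frontier_subset_closure hw
  simp only [closure_eq_self_union_frontier] at hwcl hVU hUV
  rcases hwcl with (h | h) | (h | h)
  · exact absurd h hwUV.1
  · exact ⟨h, (hUV h).resolve_left hwUV.2⟩
  · exact absurd h hwUV.2
  · exact ⟨(hVU h).resolve_left hwUV.1, h⟩

theorem SimpleClosedCurve.ssubset_or_ssubset_of_inter_nonempty {U V : Set (ℝ × ℝ)}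
    (hC : SimpleClosedCurve (frontier U)) (hUo : IsOpen U) (hVo : IsOpen V)
    (hUb : IsBounded U) (hVb : IsBounded V) (hUc : IsPreconnected U) (hVc : IsPreconnected V)
    (hfr : frontier U ≠ frontier V)
    (hnocrossV : (frontier V ∩ U).Nonempty → frontier V ⊆ closure U)
    (hnocrossU : (frontier U ∩ V).Nonempty → frontier U ⊆ closure V)
    (hne : (U ∩ V).Nonempty) : U ⊂ V ∨ V ⊂ U := by
  by_cases hVU : (frontier V ∩ U).Nonempty
  · by_cases hUV : (frontier U ∩ V).Nonempty
    · exact absurd (hC.disjoint_of_frontier_subset_closure hUo hVo hUb hVb (hnocrossV hVU)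
        (hnocrossU hUV) hUV) (not_disjoint_iff_nonempty_inter.2 hne)
    · refine Or.inr (ssubset_of_subset_of_ne ?_ fun h ↦ hfr (h ▸ rfl))
      exact hVc.subset_of_disjoint_frontier hUo (inter_comm U V ▸ hne)
        (disjoint_right.2 fun z hz hzV ↦ hUV ⟨z, hz, hzV⟩)
  · refine Or.inl (ssubset_of_subset_of_ne ?_ fun h ↦ hfr (h ▸ rfl))
    exact hUc.subset_of_disjoint_frontier hVo hne
      (disjoint_right.2 fun z hz hzU ↦ hVU ⟨z, hz, hzU⟩)

/-- let `S` be a finite family of simple closed curves `curve i`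
with bounded complementary components `b i` (nonempty, open, bounded, with
frontier the curve, disjoint from the curve), pairwise non-crossing: for
distinct `s t ∈ S`, if `curve t` meets `b s` then `curve t ⊆ b s ∪ curve s`.
Then the `b s`, `s ∈ S`, are pairwise disjoint iff
`S_II = {s ∈ S | ∃ t ∈ S, b t ⊊ b s}` is empty. -/
theorem seifert_disks_disjoint_iff_SII_empty
    {ι : Type*} (S : Finset ι) (curve b : ι → Set (ℝ × ℝ))
    (hscc : ∀ i ∈ S, SimpleClosedCurve (curve i))
    (hb : ∀ i ∈ S, (b i).Nonempty ∧ IsOpen (b i) ∧ Bornology.IsBounded (b i) ∧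
      IsConnected (b i) ∧ frontier (b i) = curve i ∧ Disjoint (b i) (curve i))
    (hdistinct : ∀ i ∈ S, ∀ j ∈ S, i ≠ j → curve i ≠ curve j)
    (hnocross : ∀ s ∈ S, ∀ t ∈ S, s ≠ t →
      (curve t ∩ b s).Nonempty → curve t ⊆ b s ∪ curve s) :
    (∀ s ∈ S, ∀ t ∈ S, s ≠ t → Disjoint (b s) (b t)) ↔
      ¬ ∃ s ∈ S, ∃ t ∈ S, b t ⊂ b s := by
  have hcross : ∀ s ∈ S, ∀ t ∈ S, s ≠ t →
      (frontier (b t) ∩ b s).Nonempty → frontier (b t) ⊆ closure (b s) := fun s hs t ht hst ↦ by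
    rw [closure_eq_self_union_frontier, (hb s hs).2.2.2.2.1, (hb t ht).2.2.2.2.1]
    exact hnocross s hs t ht hst
  constructor
  · rintro hdisj ⟨s, hs, t, ht, hts⟩
    obtain rfl | hst := eq_or_ne s t
    · exact hts.ne rfl
    · obtain ⟨y, hy⟩ := (hb t ht).1
      exact disjoint_left.1 (hdisj s hs t ht hst) (hts.subset hy) hy
  · intro hno s hs t ht hst
    obtain ⟨-, hso, hsb, hsc, hsfr, -⟩ := hb s hs
    obtain ⟨-, hto, htb, htc, htfr, -⟩ := hb t ht
    rw [disjoint_iff_inter_eq_empty, ← not_nonempty_iff_eq_empty]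
    intro hne
    rcases (hsfr ▸ hscc s hs).ssubset_or_ssubset_of_inter_nonempty hso hto hsb htb
      hsc.isPreconnected htc.isPreconnected (hsfr ▸ htfr ▸ hdistinct s hs t ht hst)
      (hcross s hs t ht hst) (hcross t ht s hs hst.symm) hne with h | h
    · exact hno ⟨t, ht, s, hs, h⟩
    · exact hno ⟨s, hs, t, ht, h⟩
end
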